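/- Let s: ℝ → ℝ be a smooth, positive, π-periodic function, and define x(θ) := ∫₀^θ cos(α)/s(α)³ dα and y(θ) := ∫₀^θ sin(α)/s(α)³ dα. Then the affine curvature of the curve (x, y) equals the cube of the affine support function of the curve with support function s: for all θ, (x''(θ)y'''(θ) − x'''(θ)y''(θ)) / (x'(θ)y''(θ) − x''(θ)y'(θ))^(5/3) − (1/2)·(d²/dθ²)[ (x'(θ)y''(θ) − x''(θ)y'(θ))^(−2/3) ] = s(θ)³·(s''(θ) + s(θ)). -/

import Mathlib

/-!
Along `(x, y)` the velocity is `f(θ) (cos θ, sin θ)` with `f = s⁻³`: `θ` is the tangent angle and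
`f` the radius of curvature. Differentiating in the rotating frame `(cos θ, sin θ)` gives
`x'y'' − x''y' = f²` and `x''y''' − x'''y'' = f² + 2f'² − f f''`. For `f = s⁻³` the powers
`(f²)^(5/3)` and `(f²)^(-2/3)` are `s⁻¹⁰` and `s⁴`, and the affine curvature collapses to
`s⁴ + s³ s''`.
-/

open Real

noncomputable section

def wronskian {𝕜 : Type*} [NontriviallyNormedField 𝕜] (u v : 𝕜 → 𝕜) (t : 𝕜) : 𝕜 :=
  u t * deriv v t - deriv u t * v t

def affineCurvature (x y : ℝ → ℝ) (θ : ℝ) : ℝ :=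
  wronskian (deriv (deriv x)) (deriv (deriv y)) θ / wronskian (deriv x) (deriv y) θ ^ ((5:ℝ) / 3) -
    1 / 2 * iteratedDeriv 2 (fun θ' => wronskian (deriv x) (deriv y) θ' ^ (-(2:ℝ) / 3)) θ

section TangentAngle

variable {a b f : ℝ → ℝ}

theorem hasDerivAt_mul_cos_sub_mul_sin {a' b' t : ℝ} (ha : HasDerivAt a a' t)
    (hb : HasDerivAt b b' t) :
    HasDerivAt (fun u => a u * cos u - b u * sin u)
      ((a' - b t) * cos t - (b' + a t) * sin t) t :=
  ((ha.mul (hasDerivAt_cos t)).sub (hb.mul (hasDerivAt_sin t))).congr_deriv (by ring)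

theorem hasDerivAt_mul_sin_add_mul_cos {a' b' t : ℝ} (ha : HasDerivAt a a' t)
    (hb : HasDerivAt b b' t) :
    HasDerivAt (fun u => a u * sin u + b u * cos u)
      ((a' - b t) * sin t + (b' + a t) * cos t) t :=
  ((ha.mul (hasDerivAt_sin t)).add (hb.mul (hasDerivAt_cos t))).congr_deriv (by ring)

theorem wronskian_mul_cos_sub_mul_sin (ha : Differentiable ℝ a) (hb : Differentiable ℝ b)
    (t : ℝ) :
    wronskian (fun u => a u * cos u - b u * sin u) (fun u => a u * sin u + b u * cos u) t =
      a t ^ 2 + b t ^ 2 + a t * deriv b t - deriv a t * b t := by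
  rw [wronskian, (hasDerivAt_mul_cos_sub_mul_sin (ha t).hasDerivAt (hb t).hasDerivAt).deriv,
    (hasDerivAt_mul_sin_add_mul_cos (ha t).hasDerivAt (hb t).hasDerivAt).deriv]
  linear_combination (a t ^ 2 + b t ^ 2 + a t * deriv b t - deriv a t * b t) * sin_sq_add_cos_sq t

theorem deriv_mul_cos (hf : Differentiable ℝ f) :
    deriv (fun t => f t * cos t) = fun t => deriv f t * cos t - f t * sin t :=
  funext fun t => by
    simpa using (hasDerivAt_mul_cos_sub_mul_sin (hf t).hasDerivAt (hasDerivAt_const t 0)).deriv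

theorem deriv_mul_sin (hf : Differentiable ℝ f) :
    deriv (fun t => f t * sin t) = fun t => deriv f t * sin t + f t * cos t :=
  funext fun t => by
    simpa using (hasDerivAt_mul_sin_add_mul_cos (hf t).hasDerivAt (hasDerivAt_const t 0)).deriv

theorem wronskian_mul_cos_mul_sin (hf : Differentiable ℝ f) (t : ℝ) :
    wronskian (fun u => f u * cos u) (fun u => f u * sin u) t = f t ^ 2 := by
  simpa using wronskian_mul_cos_sub_mul_sin hf (differentiable_const 0) t

theorem wronskian_deriv_mul_cos_deriv_mul_sin (hf : ContDiff ℝ 2 f) (t : ℝ) :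
    wronskian (deriv fun u => f u * cos u) (deriv fun u => f u * sin u) t =
      f t ^ 2 + 2 * deriv f t ^ 2 - f t * deriv (deriv f) t := by
  have hf₁ : Differentiable ℝ f := hf.differentiable two_ne_zero
  rw [deriv_mul_cos hf₁, deriv_mul_sin hf₁,
    wronskian_mul_cos_sub_mul_sin hf.differentiable_deriv_two hf₁]
  ring

end TangentAngle

section FunZPow

variable {s : ℝ → ℝ}

theorem deriv_fun_zpow (m : ℤ) (hs : Differentiable ℝ s) (hs₀ : ∀ t, s t ≠ 0) :
    deriv (fun t => s t ^ m) = fun t => m * s t ^ (m - 1) * deriv s t :=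
  funext fun t => ((hasDerivAt_zpow m (s t) (.inl (hs₀ t))).comp t (hs t).hasDerivAt).deriv

theorem deriv_deriv_fun_zpow (m : ℤ) (hs : ContDiff ℝ 2 s) (hs₀ : ∀ t, s t ≠ 0) (t : ℝ) :
    deriv (deriv fun u => s u ^ m) t =
      m * (m - 1) * s t ^ (m - 2) * deriv s t ^ 2 + m * s t ^ (m - 1) * deriv (deriv s) t := by
  have hs₁ : Differentiable ℝ s := hs.differentiable two_ne_zero
  have h : HasDerivAt (fun u => m * s u ^ (m - 1) * deriv s u)
      (m * ((m - 1) * s t ^ (m - 1 - 1) * deriv s t) * deriv s t +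
        m * s t ^ (m - 1) * deriv (deriv s) t) t :=
    ((((hasDerivAt_zpow (m - 1) (s t) (.inl (hs₀ t))).comp t (hs₁ t).hasDerivAt).const_mul
      (m : ℝ)).mul (hs.differentiable_deriv_two t).hasDerivAt).congr_deriv
        (by simp only [Function.comp_apply]; push_cast; ring)
  rw [deriv_fun_zpow m hs₁ hs₀, h.deriv, sub_sub, one_add_one_eq_two]
  ring

end FunZPow

theorem zpow_rpow_of_mul_eq {a : ℝ} (ha : 0 < a) {m n : ℤ} {p : ℝ} (h : (m : ℝ) * p = n) :
    (a ^ m) ^ p = a ^ n := by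
  rw [← Real.rpow_intCast, ← Real.rpow_mul ha.le, h, Real.rpow_intCast]

theorem affineCurvature_of_deriv_eq_mul_cos_mul_sin {x y f : ℝ → ℝ} (hf : ContDiff ℝ 2 f)
    (hx : deriv x = fun t => f t * cos t) (hy : deriv y = fun t => f t * sin t) (θ : ℝ) :
    affineCurvature x y θ =
      (f θ ^ 2 + 2 * deriv f θ ^ 2 - f θ * deriv (deriv f) θ) / (f θ ^ 2) ^ ((5:ℝ) / 3) -
        1 / 2 * iteratedDeriv 2 (fun t => (f t ^ 2) ^ (-(2:ℝ) / 3)) θ := by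
  simp only [affineCurvature, hx, hy, wronskian_mul_cos_mul_sin (hf.differentiable two_ne_zero),
    wronskian_deriv_mul_cos_deriv_mul_sin hf]

theorem affineCurvature_of_deriv_eq_div_pow_three {x y s : ℝ → ℝ} (hs : ContDiff ℝ 2 s)
    (hpos : ∀ t, 0 < s t) (hx : deriv x = fun t => cos t / s t ^ 3)
    (hy : deriv y = fun t => sin t / s t ^ 3) (θ : ℝ) :
    affineCurvature x y θ = s θ ^ 3 * (iteratedDeriv 2 s θ + s θ) := by
  have hs₀ : ∀ t, s t ≠ 0 := fun t => (hpos t).ne'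
  have hs₁ : Differentiable ℝ s := hs.differentiable two_ne_zero
  have hf_eq : (fun t => s t ^ (-3 : ℤ)) = fun t => (s t ^ 3)⁻¹ := by
    simp only [zpow_neg, zpow_ofNat]
  have hf : ContDiff ℝ 2 fun t => s t ^ (-3 : ℤ) :=
    hf_eq ▸ (hs.pow 3).inv fun t => pow_ne_zero 3 (hs₀ t)
  have hsq : ∀ t, (s t ^ (-3 : ℤ)) ^ 2 = s t ^ (-6 : ℤ) := fun t => by
    rw [← zpow_natCast, ← zpow_mul]; norm_num
  rw [affineCurvature_of_deriv_eq_mul_cos_mul_sin hf (by simp [hx, div_eq_inv_mul])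
    (by simp [hy, div_eq_inv_mul])]
  simp only [hsq, iteratedDeriv_succ, iteratedDeriv_zero,
    zpow_rpow_of_mul_eq (hpos _) (show ((-6 : ℤ) : ℝ) * (-2 / 3) = (4 : ℤ) by norm_num),
    zpow_rpow_of_mul_eq (hpos θ) (show ((-6 : ℤ) : ℝ) * (5 / 3) = (-10 : ℤ) by norm_num)]
  rw [deriv_deriv_fun_zpow 4 hs hs₀, deriv_deriv_fun_zpow (-3) hs hs₀,
    deriv_fun_zpow (-3) hs₁ hs₀]
  norm_num
  field_simp
  ring

theorem dual_curve_affine_curvature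
    (s : ℝ → ℝ) (hsmooth : ContDiff ℝ (⊤ : ℕ∞) s) (hpos : ∀ θ, 0 < s θ)
    (x y : ℝ → ℝ)
    (hx : x = fun θ => ∫ α in (0:ℝ)..θ, Real.cos α / s α ^ 3)
    (hy : y = fun θ => ∫ α in (0:ℝ)..θ, Real.sin α / s α ^ 3) :
    ∀ θ,
      (deriv (deriv x) θ * deriv (deriv (deriv y)) θ -
            deriv (deriv (deriv x)) θ * deriv (deriv y) θ) /
          ((deriv x θ * deriv (deriv y) θ - deriv (deriv x) θ * deriv y θ) ^ ((5:ℝ) / 3)) -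
        (1 / 2) *
          iteratedDeriv 2
            (fun θ' =>
              (deriv x θ' * deriv (deriv y) θ' - deriv (deriv x) θ' * deriv y θ') ^
                (-(2:ℝ) / 3)) θ =
      s θ ^ 3 * (iteratedDeriv 2 s θ + s θ) := by
  have hs : ContDiff ℝ 2 s := hsmooth.of_le (by norm_cast)
  have hs₃ : ∀ t, s t ^ 3 ≠ 0 := fun t => pow_ne_zero 3 (hpos t).ne'
  have hx' : deriv x = fun t => cos t / s t ^ 3 := hx ▸ funext fun t =>
    (continuous_cos.div (hs.continuous.pow 3) hs₃).deriv_integral _ 0 t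
  have hy' : deriv y = fun t => sin t / s t ^ 3 := hy ▸ funext fun t =>
    (continuous_sin.div (hs.continuous.pow 3) hs₃).deriv_integral _ 0 t
  exact affineCurvature_of_deriv_eq_div_pow_three hs hpos hx' hy'

end
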